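/- Let s ≥ 1 be an integer and c > 0 a real number. For each N ∈ ℕ let (a_N(n))_{n∈ℕ} be real numbers satisfying |a_N(n)| ≤ e^{-cn} for all n, and suppose a_N(n) → e^{-cn} as N → ∞ for each fixed n. Then for each N the series g_N := ∑_{n=0}^∞ a_N(n)·Q_n^s converges in L²(ν_s), and ∫ |g_N − f_c| dν_s → 0 as N → ∞, where f_c(x) = (e^{c}+√s)/(e^{c}+e^{-c}+√s−x) is the density of η_c^s with respect to ν_s. -/

import Mathlib

/-!
On the set carrying `ν_s` (the band `|x - √s| ≤ 2` and the atom `-1/√s`) the polynomials `Q_n`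
grow at most linearly. In the band, the recurrence preserves
`Q_{n+1}² - (x - √s) Q_n Q_{n+1} + Q_n² = √s (x - √s) + s + 1`, which forces
`|Q_{n+1}| ≤ |Q_n| + √s + 1`; at the atom, `Q_n = (-1/√s)^n`. So every series `∑ a_N(n) Q_n`
is dominated, uniformly in `N` and `x`, by `∑ (√s + 1)(n + 1) e^{-cn} < ∞`: it converges
uniformly on a set of full measure, hence in `L²` of the finite measure `ν_s`. Summing the
recurrence against `rⁿ`, `r = e^{-c}`, gives the generating function
`∑ rⁿ Q_n(x) = (1 + r√s) / (1 - r(x - √s) + r²) = f_c(x)`, and dominated convergence (first in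
`n`, then in `x`) gives `∫ |g_N - f_c| dν_s → 0`.
-/

open MeasureTheory Polynomial Filter

/-- The orthogonal polynomials `Q_n^s`: `Q_0 = 1`, `Q_1 = X`,
`X * Q_n = Q_{n+1} + √s * Q_n + Q_{n-1}`. -/
noncomputable def Qpoly (s : ℕ) : ℕ → Polynomial ℝ
  | 0 => 1
  | 1 => Polynomial.X
  | (n + 2) => Polynomial.X * Qpoly s (n + 1)
      - Polynomial.C (Real.sqrt s) * Qpoly s (n + 1) - Qpoly s n

/-- Chebyshev polynomials of the second kind: `P_0 = 1`, `P_1 = X`,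
`X * P_n = P_{n+1} + P_{n-1}`. -/
noncomputable def Ppoly : ℕ → Polynomial ℝ
  | 0 => 1
  | 1 => Polynomial.X
  | (n + 2) => Polynomial.X * Ppoly (n + 1) - Ppoly n

/-- The density of the absolutely continuous part of `ν_s`. -/
noncomputable def nuDensity (s : ℕ) (x : ℝ) : ℝ :=
  Real.sqrt (4 - (x - Real.sqrt s) ^ 2) / (2 * Real.pi * (x * Real.sqrt s + 1))

/-- The free Meixner measure `ν_s`. -/
noncomputable def nuMeas (s : ℕ) : Measure ℝ :=
  volume.withDensity (fun x => ENNReal.ofReal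
      (if |x - Real.sqrt s| ≤ 2 then nuDensity s x else 0))
    + ENNReal.ofReal (1 - 1 / (s : ℝ)) • Measure.dirac (-1 / Real.sqrt s)

/-- The density `f_c`. -/
noncomputable def fc (s : ℕ) (c x : ℝ) : ℝ :=
  (Real.exp c + Real.sqrt s) / (Real.exp c + Real.exp (-c) + Real.sqrt s - x)

/-- The measure `η_c^s = f_c · ν_s + 1_{c<0} ((e^{-c}-e^c)/(e^{-c}+√s)) δ_{e^c+√s+e^{-c}}`. -/
noncomputable def etaMeas (s : ℕ) (c : ℝ) : Measure ℝ :=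
  (nuMeas s).withDensity (fun x => ENNReal.ofReal (fc s c x))
    + (if c < 0 then
        ENNReal.ofReal ((Real.exp (-c) - Real.exp c) / (Real.exp (-c) + Real.sqrt s))
      else 0) • Measure.dirac (Real.exp c + Real.sqrt s + Real.exp (-c))

/-- Total variation distance between two Borel measures on `ℝ`. -/
noncomputable def dTV (μ ν : Measure ℝ) : ℝ :=
  ⨆ A : {A : Set ℝ // MeasurableSet A}, |(μ A.1).toReal - (ν A.1).toReal|

open Real Topology
open scoped ENNReal

section UniformLimit

variable {α ι E : Type*} [MeasurableSpace α] {μ : Measure α} [IsFiniteMeasure μ]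
  [NormedAddCommGroup E]

lemma tendsto_eLpNorm_sub_of_tendstoUniformlyOn {l : Filter ι} {f : ι → α → E} {g : α → E}
    {S : Set α} (hS : ∀ᵐ x ∂μ, x ∈ S) (hfg : TendstoUniformlyOn f g l S) (p : ℝ≥0∞) :
    Tendsto (fun i => eLpNorm (f i - g) p μ) l (𝓝 0) := by
  set K := μ Set.univ ^ p.toReal⁻¹
  have hK : K ≠ ∞ := ENNReal.rpow_ne_top_of_nonneg (by positivity) (measure_ne_top μ _)
  have hKδ : Tendsto (fun δ : ℝ => K * ENNReal.ofReal δ) (𝓝[>] 0) (𝓝 0) := by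
    have := ENNReal.Tendsto.const_mul (ENNReal.tendsto_ofReal (tendsto_id (x := 𝓝 (0 : ℝ))))
      (Or.inr hK)
    simpa using this.mono_left nhdsWithin_le_nhds
  rw [ENNReal.tendsto_nhds_zero]
  intro ε hε
  obtain ⟨δ, hδε, hδ⟩ :=
    ((hKδ.eventually (eventually_le_nhds hε.bot_lt)).and self_mem_nhdsWithin).exists
  filter_upwards [Metric.tendstoUniformlyOn_iff.mp hfg δ hδ] with i hi
  refine (eLpNorm_le_of_ae_bound ?_).trans hδε
  filter_upwards [hS] with x hx
  simpa [dist_eq_norm'] using (hi x hx).le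

end UniformLimit

section DominatedSeries

variable {α E : Type*} [MeasurableSpace α] {μ : Measure α} [IsFiniteMeasure μ]
  [NormedAddCommGroup E] [CompleteSpace E] [SecondCountableTopology E]
  [MeasurableSpace E] [BorelSpace E]

lemma tendsto_integral_norm_tsum_sub_tsum {F : ℕ → ℕ → α → E} {G : ℕ → α → E} {B : ℕ → ℝ}
    {S : Set α} (hS : ∀ᵐ x ∂μ, x ∈ S) (hF : ∀ N n, Measurable (F N n))
    (hG : ∀ n, Measurable (G n)) (hB : Summable B) (hFB : ∀ N n, ∀ x ∈ S, ‖F N n x‖ ≤ B n)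
    (hFG : ∀ n x, Tendsto (fun N => F N n x) atTop (𝓝 (G n x))) :
    Tendsto (fun N => ∫ x, ‖∑' n, F N n x - ∑' n, G n x‖ ∂μ) atTop (𝓝 0) := by
  have hGB : ∀ n, ∀ x ∈ S, ‖G n x‖ ≤ B n := fun n x hx =>
    le_of_tendsto (hFG n x).norm (Eventually.of_forall fun N => hFB N n x hx)
  have hbound : ∀ N, ∀ᵐ x ∂μ, ‖‖∑' n, F N n x - ∑' n, G n x‖‖ ≤ 2 * ∑' n, B n := by
    intro N
    filter_upwards [hS] with x hx
    rw [norm_norm, two_mul]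
    exact (norm_sub_le _ _).trans (add_le_add (tsum_of_norm_bounded hB.hasSum (hFB N · x hx))
      (tsum_of_norm_bounded hB.hasSum (hGB · x hx)))
  have hlim : ∀ᵐ x ∂μ, Tendsto (fun N => ‖∑' n, F N n x - ∑' n, G n x‖) atTop (𝓝 0) := by
    filter_upwards [hS] with x hx
    have := tendsto_tsum_of_dominated_convergence hB (fun n => hFG n x)
      (Eventually.of_forall fun N n => hFB N n x hx)
    simpa using (this.sub_const (∑' n, G n x)).norm
  simpa using tendsto_integral_of_dominated_convergence _
    (fun N => ((Measurable.tsum (hF N)).sub (Measurable.tsum hG)).norm.aestronglyMeasurable)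
    (integrable_const _) hbound hlim

end DominatedSeries

section Qpoly

variable (s : ℕ)

lemma Qpoly_eval_add_two (n : ℕ) (x : ℝ) :
    (Qpoly s (n + 2)).eval x = (x - √s) * (Qpoly s (n + 1)).eval x - (Qpoly s n).eval x := by
  simp only [Qpoly, eval_sub, eval_mul, eval_X, eval_C]
  ring

lemma Qpoly_eval_invariant (n : ℕ) (x : ℝ) :
    (Qpoly s (n + 1)).eval x ^ 2 - (x - √s) * (Qpoly s n).eval x * (Qpoly s (n + 1)).eval x
      + (Qpoly s n).eval x ^ 2 = √s * (x - √s) + s + 1 := by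
  induction n with
  | zero =>
    simp only [Qpoly, eval_one, eval_X]
    linear_combination Real.sq_sqrt (Nat.cast_nonneg s)
  | succ n ih =>
    rw [Qpoly_eval_add_two]
    linear_combination ih

lemma abs_Qpoly_eval_succ_le {x : ℝ} (hx : |x - √s| ≤ 2) (n : ℕ) :
    |(Qpoly s (n + 1)).eval x| ≤ |(Qpoly s n).eval x| + (√s + 1) := by
  set A := (Qpoly s (n + 1)).eval x
  set B := (Qpoly s n).eval x
  have hcross : (x - √s) * B * A ≤ 2 * (|B| * |A|) := by
    calc (x - √s) * B * A ≤ |x - √s| * (|B| * |A|) := by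
          rw [← abs_mul, ← abs_mul, ← mul_assoc]; exact le_abs_self _
      _ ≤ 2 * (|B| * |A|) := by gcongr
  have hlin : √s * (x - √s) ≤ 2 * √s := by
    nlinarith [le_abs_self (x - √s), Real.sqrt_nonneg s]
  have hsq : (|A| - |B|) ^ 2 ≤ (√s + 1) ^ 2 := by
    nlinarith [Qpoly_eval_invariant s n x, sq_abs A, sq_abs B, Real.sq_sqrt (Nat.cast_nonneg s)]
  linarith [abs_le_of_sq_le_sq' hsq (by positivity)]

lemma abs_Qpoly_eval_le_of_abs_sub_le_two {x : ℝ} (hx : |x - √s| ≤ 2) (n : ℕ) :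
    |(Qpoly s n).eval x| ≤ (√s + 1) * (n + 1) := by
  induction n with
  | zero => simp [Qpoly]
  | succ n ih =>
    push_cast
    linarith [abs_Qpoly_eval_succ_le s hx n]

end Qpoly

lemma Qpoly_eval_neg_inv_sqrt {s : ℕ} (hs : 0 < s) (n : ℕ) :
    (Qpoly s n).eval (-1 / √s) = (-1 / √s) ^ n := by
  have hroot : ((-1 / √s) - √s) * (-1 / √s) - 1 = (-1 / √s) ^ 2 := by
    have : √(s : ℝ) ≠ 0 := by positivity
    field_simp
    ring
  induction n using Nat.strong_induction_on with
  | _ n ih =>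
    match n with
    | 0 => simp [Qpoly]
    | 1 => simp [Qpoly]
    | m + 2 =>
      rw [Qpoly_eval_add_two, ih (m + 1) (by omega), ih m (by omega)]
      linear_combination (-1 / √s) ^ m * hroot

def nuSupport (s : ℕ) : Set ℝ := {x | |x - √s| ≤ 2 ∨ x = -1 / √s}

lemma abs_Qpoly_eval_le {s : ℕ} (hs : 0 < s) {x : ℝ} (hx : x ∈ nuSupport s) (n : ℕ) :
    |(Qpoly s n).eval x| ≤ (√s + 1) * (n + 1) := by
  rcases hx with hx | rfl
  · exact abs_Qpoly_eval_le_of_abs_sub_le_two s hx n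
  have hs1 : 1 ≤ √(s : ℝ) := Real.one_le_sqrt.mpr (by exact_mod_cast hs)
  have hpow : |(-1 / √s) ^ n| ≤ 1 := by
    rw [abs_pow, abs_div, abs_neg, abs_one, abs_of_pos (by positivity)]
    exact pow_le_one₀ (by positivity) ((div_le_one (by positivity)).mpr hs1)
  rw [Qpoly_eval_neg_inv_sqrt hs]
  nlinarith [Real.sqrt_nonneg s, (n.cast_nonneg : (0 : ℝ) ≤ n)]

lemma sub_sqrt_le_two_of_mem_nuSupport {s : ℕ} {x : ℝ} (hx : x ∈ nuSupport s) : x - √s ≤ 2 := by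
  rcases hx with hx | rfl
  · exact (abs_le.mp hx).2
  · have : -1 / √(s : ℝ) ≤ 0 := div_nonpos_of_nonpos_of_nonneg (by norm_num) (by positivity)
    linarith [Real.sqrt_nonneg s]

lemma ae_mem_nuSupport (s : ℕ) : ∀ᵐ x ∂nuMeas s, x ∈ nuSupport s := by
  have hmeas : Measurable fun x => ENNReal.ofReal (if |x - √s| ≤ 2 then nuDensity s x else 0) :=
    (Measurable.ite (measurableSet_le (by fun_prop) measurable_const)
      (by unfold nuDensity; fun_prop) measurable_const).ennreal_ofReal
  rw [nuMeas, ae_add_measure_iff, ae_withDensity_iff hmeas]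
  refine ⟨Eventually.of_forall fun x hx => Or.inl ?_, Measure.ae_smul_measure ?_ _⟩
  · by_contra h
    simp [h] at hx
  · rw [ae_dirac_eq]
    exact Or.inr rfl

/-- For `s = 1` the density is unbounded: `x√s + 1` vanishes at the left end `√s - 2`. -/
lemma nuDensity_le_rpow {s : ℕ} (hs : 0 < s) {x : ℝ} (hx : |x - √s| ≤ 2) :
    nuDensity s x ≤ π⁻¹ * (x - (√s - 2)) ^ (-(1 / 2) : ℝ) := by
  set u := x - (√s - 2)
  have hu0 : 0 ≤ u := by linarith [(abs_le.mp hx).1]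
  rcases hu0.eq_or_lt with hu | hu
  · have : x - √s = -2 := by linarith
    simp only [nuDensity, this]
    norm_num
    positivity
  have hs1 : 1 ≤ √(s : ℝ) := Real.one_le_sqrt.mpr (by exact_mod_cast hs)
  have hnum : √(4 - (x - √s) ^ 2) ≤ 2 * √u := by
    rw [show (2 : ℝ) * √u = √(2 ^ 2 * u) by simp [Real.sqrt_mul]]
    exact Real.sqrt_le_sqrt (by nlinarith)
  have hden : u ≤ x * √s + 1 := by
    have : x * √s + 1 = √s * u + (√s - 1) ^ 2 := by ring
    nlinarith [sq_nonneg (√(s : ℝ) - 1)]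
  have hrpow : u ^ (-(1 / 2) : ℝ) = (√u)⁻¹ := by
    rw [Real.rpow_neg hu.le, ← Real.sqrt_eq_rpow]
  calc nuDensity s x ≤ 2 * √u / (2 * π * u) :=
        div_le_div₀ (by positivity) hnum (by positivity) (by gcongr)
    _ = π⁻¹ * u ^ (-(1 / 2) : ℝ) := by
        rw [hrpow]
        field_simp
        rw [Real.sq_sqrt hu.le]

lemma integrableOn_Icc_sub_rpow {a b r : ℝ} (hab : a ≤ b) (hr : -1 < r) :
    IntegrableOn (fun x => (x - a) ^ r) (Set.Icc a b) := by
  have h := (intervalIntegral.intervalIntegrable_rpow' hr (a := 0) (b := b - a)).comp_sub_right a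
  simp only [zero_add, sub_add_cancel] at h
  exact (intervalIntegrable_iff_integrableOn_Icc_of_le hab).mp h

lemma isFiniteMeasure_nuMeas {s : ℕ} (hs : 0 < s) : IsFiniteMeasure (nuMeas s) := by
  set a := √(s : ℝ) - 2
  set g := (Set.Icc a (√s + 2)).indicator fun x => π⁻¹ * (x - a) ^ (-(1 / 2) : ℝ)
  have hg : Integrable g :=
    IntegrableOn.integrable_indicator
      ((integrableOn_Icc_sub_rpow (r := -(1 / 2)) (by linarith) (by norm_num)).const_mul _)
      measurableSet_Icc
  have hle : ∀ x, ENNReal.ofReal (if |x - √s| ≤ 2 then nuDensity s x else 0)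
      ≤ ENNReal.ofReal (g x) := by
    intro x
    split_ifs with hx
    · have hmem : x ∈ Set.Icc a (√s + 2) := by
        constructor <;> linarith [abs_le.mp hx]
      simp only [g, Set.indicator_of_mem hmem]
      exact ENNReal.ofReal_le_ofReal (nuDensity_le_rpow hs hx)
    · simp
  have : IsFiniteMeasure (volume.withDensity fun x =>
      ENNReal.ofReal (if |x - √s| ≤ 2 then nuDensity s x else 0)) :=
    isFiniteMeasure_withDensity ((lintegral_mono hle).trans_lt hg.lintegral_lt_top).ne
  have := Measure.smul_finite (Measure.dirac (-1 / √(s : ℝ))) (ENNReal.ofReal_ne_top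
    (r := 1 - 1 / (s : ℝ)))
  unfold nuMeas
  infer_instance

lemma summable_succ_mul_geometric {r : ℝ} (hr0 : 0 ≤ r) (hr1 : r < 1) :
    Summable fun n : ℕ => ((n : ℝ) + 1) * r ^ n := by
  have hr : ‖r‖ < 1 := by rwa [Real.norm_of_nonneg hr0]
  simpa [add_mul] using (summable_pow_mul_geometric_of_norm_lt_one 1 hr).add
    (summable_geometric_of_lt_one hr0 hr1)

lemma mul_tsum_pow_mul_Qpoly_eval (s : ℕ) {r x : ℝ}
    (h : Summable fun n => r ^ n * (Qpoly s n).eval x) :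
    (1 - r * (x - √s) + r ^ 2) * ∑' n, r ^ n * (Qpoly s n).eval x = 1 + r * √s := by
  set f := fun n => r ^ n * (Qpoly s n).eval x
  have h1 : Summable fun n => f (n + 1) := (summable_nat_add_iff 1).mpr h
  have hrec : ∑' n, f (n + 2) = r * (x - √s) * ∑' n, f (n + 1) - r ^ 2 * ∑' n, f n := by
    rw [← tsum_mul_left, ← tsum_mul_left, ← (h1.mul_left _).tsum_sub (h.mul_left _)]
    refine tsum_congr fun n => ?_
    simp only [f, Qpoly_eval_add_two]
    ring
  have e0 : ∑' n, f n = 1 + ∑' n, f (n + 1) := by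
    simpa [f, Qpoly] using h.tsum_eq_zero_add
  have e1 : ∑' n, f (n + 1) = r * x + ∑' n, f (n + 2) := by
    simpa [f, Qpoly] using h1.tsum_eq_zero_add
  linear_combination (1 - r * (x - √s)) * e0 + e1 + hrec

lemma fc_eq_div (s : ℕ) (c x : ℝ) :
    fc s c x = (1 + exp (-c) * √s) / (1 - exp (-c) * (x - √s) + exp (-c) ^ 2) := by
  have hinv : exp (-c) * exp c = 1 := by rw [← exp_add]; simp
  rw [fc, ← mul_div_mul_left _ _ (exp_pos (-c)).ne']
  congr 1 <;> linear_combination hinv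

lemma tsum_exp_neg_pow_mul_Qpoly_eval {s : ℕ} (hs : 0 < s) {c : ℝ} (hc : 0 < c) {x : ℝ}
    (hx : x ∈ nuSupport s) : ∑' n, exp (-c) ^ n * (Qpoly s n).eval x = fc s c x := by
  set r := exp (-c)
  have hr0 : 0 < r := exp_pos _
  have hr1 : r < 1 := Real.exp_lt_one_iff.mpr (by linarith)
  have hsum : Summable fun n => r ^ n * (Qpoly s n).eval x := by
    refine .of_norm_bounded ((summable_succ_mul_geometric hr0.le hr1).mul_left (√s + 1))
      fun n => ?_
    rw [Real.norm_eq_abs, abs_mul, abs_of_pos (pow_pos hr0 n)]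
    nlinarith [abs_Qpoly_eval_le hs hx n, pow_pos hr0 n]
  have hden : 0 < 1 - r * (x - √s) + r ^ 2 := by
    nlinarith [mul_le_mul_of_nonneg_left (sub_sqrt_le_two_of_mem_nuSupport hx) hr0.le]
  rw [fc_eq_div, eq_div_iff hden.ne', mul_comm]
  exact mul_tsum_pow_mul_Qpoly_eval s hsum

/-- Dominated `L²`-series and `L¹`-convergence of densities to `f_c`. -/
theorem stmt17 (s : ℕ) (hs : 1 ≤ s) (c : ℝ) (hc : 0 < c) (a : ℕ → ℕ → ℝ)
    (hbd : ∀ N n, |a N n| ≤ Real.exp (-(c * n)))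
    (hlim : ∀ n, Filter.Tendsto (fun N => a N n) Filter.atTop
      (nhds (Real.exp (-(c * n))))) :
    ∃ g : ℕ → ℝ → ℝ,
      (∀ N, MemLp (g N) 2 (nuMeas s) ∧
        Filter.Tendsto
          (fun m => eLpNorm
            (fun x => (∑ n ∈ Finset.range m, a N n * (Qpoly s n).eval x) - g N x)
            2 (nuMeas s))
          Filter.atTop (nhds 0)) ∧
      Filter.Tendsto (fun N => ∫ x, |g N x - fc s c x| ∂(nuMeas s))
        Filter.atTop (nhds 0) := by
  set r := exp (-c)
  have hr0 : 0 < r := exp_pos _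
  have hexp (n : ℕ) : exp (-(c * n)) = r ^ n := by rw [← exp_nat_mul]; ring_nf
  have ha (N n : ℕ) : |a N n| ≤ r ^ n := hexp n ▸ hbd N n
  have := isFiniteMeasure_nuMeas hs
  set B : ℕ → ℝ := fun n => (√s + 1) * ((n + 1) * r ^ n)
  have hB : Summable B :=
    (summable_succ_mul_geometric hr0.le (Real.exp_lt_one_iff.mpr (by linarith))).mul_left _
  have hdom {b : ℕ → ℝ} (hb : ∀ n, |b n| ≤ r ^ n) (n : ℕ) (x : ℝ) (hx : x ∈ nuSupport s) :
      ‖b n * (Qpoly s n).eval x‖ ≤ B n := by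
    rw [Real.norm_eq_abs, abs_mul]
    calc |b n| * |(Qpoly s n).eval x| ≤ r ^ n * ((√s + 1) * (n + 1)) :=
          mul_le_mul (hb n) (abs_Qpoly_eval_le hs hx n) (abs_nonneg _) (pow_nonneg hr0.le n)
      _ = B n := by ring
  refine ⟨fun N x => ∑' n, a N n * (Qpoly s n).eval x, fun N => ⟨?_, ?_⟩, ?_⟩
  · refine MemLp.of_bound (Measurable.tsum fun n => by fun_prop).aestronglyMeasurable
      (∑' n, B n) ?_
    filter_upwards [ae_mem_nuSupport s] with x hx
    exact tsum_of_norm_bounded hB.hasSum fun n => hdom (ha N) n x hx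
  · exact tendsto_eLpNorm_sub_of_tendstoUniformlyOn (ae_mem_nuSupport s)
      (tendstoUniformlyOn_tsum_nat hB fun n x hx => hdom (ha N) n x hx) 2
  · refine (tendsto_integral_norm_tsum_sub_tsum (ae_mem_nuSupport s) (by fun_prop)
      (G := fun n x => r ^ n * (Qpoly s n).eval x) (by fun_prop) hB
      (fun N n x hx => hdom (ha N) n x hx)
      (fun n x => by simpa [hexp] using (hlim n).mul_const _)).congr fun N => ?_
    refine integral_congr_ae ?_
    filter_upwards [ae_mem_nuSupport s] with x hx
    rw [tsum_exp_neg_pow_mul_Qpoly_eval hs hc hx, Real.norm_eq_abs]
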